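/- Let ℓ ≥ 3 be odd. Splitting an appropriate independent set of the lollipop C_{3,ℓ} yields the graph P_4 ∪ ((ℓ-1)/2)·P_3 ∪ P_2, and hence C_{3,ℓ}^3 is a subgraph of (P_4 ∪ ((ℓ-1)/2)·P_3 ∪ P_2) ∨ I_m for m = |V(C_{3,ℓ}^3)|. -/

import Mathlib

open SimpleGraph

/-- The lollipop `C_{k,ℓ}`: a cycle on vertices `0,…,k-1` together with a pendant
path `0, k, k+1, …, k+ℓ-1` appended to the cycle vertex `0` (the *center*). -/
def lollipop (k l : ℕ) : SimpleGraph (Fin (k + l)) :=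
  SimpleGraph.fromRel (fun a b =>
    (b.val = a.val + 1 ∧ b.val < k) ∨ (a.val = 0 ∧ b.val = k - 1) ∨
    (a.val = 0 ∧ b.val = k) ∨ (b.val = a.val + 1 ∧ k ≤ a.val))

/-- The edge blow-up `H^{p+1}` of a graph `H`: each edge of `H` is replaced by a
clique of order `p+1`, the `p-1` new vertices of the cliques being all distinct. -/
def edgeBlowup {V : Type*} (H : SimpleGraph V) (p : ℕ) :
    SimpleGraph (V ⊕ (H.edgeSet × Fin (p - 1))) where
  Adj x y := match x, y with
    | .inl a, .inl b => H.Adj a b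
    | .inl a, .inr e => a ∈ (e.1 : Sym2 V)
    | .inr e, .inl a => a ∈ (e.1 : Sym2 V)
    | .inr e, .inr f => e.1 = f.1 ∧ e.2 ≠ f.2
  symm := ⟨by rintro (a | e) (b | f) h <;> simp_all <;> tauto⟩
  loopless := ⟨by rintro (a | e) h <;> simp_all⟩

/-- `A` is contained in `B` as a subgraph (there is an injective graph homomorphism). -/
def IsCont {α β : Type*} (A : SimpleGraph α) (B : SimpleGraph β) : Prop :=
  ∃ f : α → β, Function.Injective f ∧ ∀ ⦃a b⦄, A.Adj a b → B.Adj (f a) (f b)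

/-- The join `G ∨ H` of two graphs: all edges between the two graphs are added. -/
def gJoin {α β : Type*} (G : SimpleGraph α) (H : SimpleGraph β) : SimpleGraph (α ⊕ β) where
  Adj x y := match x, y with
    | .inl a, .inl b => G.Adj a b
    | .inr a, .inr b => H.Adj a b
    | .inl _, .inr _ => True
    | .inr _, .inl _ => True
  symm := ⟨by rintro (a | a) (b | b) h <;> first | exact h.symm | trivial⟩
  loopless := ⟨by rintro (a | a) h <;> first | exact G.irrefl h | exact H.irrefl h⟩

/-- The disjoint union of two graphs. -/
def dUnion {α β : Type*} (G : SimpleGraph α) (H : SimpleGraph β) : SimpleGraph (α ⊕ β) where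
  Adj x y := match x, y with
    | .inl a, .inl b => G.Adj a b
    | .inr a, .inr b => H.Adj a b
    | _, _ => False
  symm := ⟨by rintro (a | a) (b | b) h <;> first | exact h.symm | exact h⟩
  loopless := ⟨by rintro (a | a) h <;> first | exact G.irrefl h | exact H.irrefl h⟩

/-- `a` vertex-disjoint copies of the graph `G`. -/
def copies {β : Type*} (a : ℕ) (G : SimpleGraph β) : SimpleGraph (Fin a × β) where
  Adj x y := x.1 = y.1 ∧ G.Adj x.2 y.2
  symm := ⟨by rintro x y ⟨h1, h2⟩; exact ⟨h1.symm, h2.symm⟩⟩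
  loopless := ⟨by rintro x ⟨h1, h2⟩; exact G.irrefl h2⟩

/-- The complete multipartite graph `K_{p}(m,…,m)` with `p` parts of size `m`. -/
def completeMultipartite (p m : ℕ) : SimpleGraph (Fin p × Fin m) where
  Adj x y := x.1 ≠ y.1
  symm := ⟨fun _ _ h => h.symm⟩

/-- `H(n,p,q) = K_{q-1} ∨ T_p(n-q+1)`. -/
def Hgraph (n p q : ℕ) : SimpleGraph (Fin (q - 1) ⊕ Fin (n - (q - 1))) :=
  gJoin (completeGraph (Fin (q - 1))) (turanGraph (n - (q - 1)) p)

/-- The number of edges of a graph. -/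
noncomputable def numEdges {α : Type*} (G : SimpleGraph α) : ℕ := Nat.card G.edgeSet

/-- `E` (a graph on `n` vertices) is the unique extremal `H`-free graph on `n`
vertices: it is `H`-free, every `H`-free graph on `n` vertices has at most as many
edges, and any `H`-free graph attaining this maximum is isomorphic to `E`. -/
def UniqueExtremal {W α : Type*} (H : SimpleGraph W) (n : ℕ) (E : SimpleGraph α) : Prop :=
  ¬ IsCont H E ∧ Nat.card α = n ∧
    ∀ G : SimpleGraph (Fin n), ¬ IsCont H G →
      numEdges G ≤ numEdges E ∧ (numEdges G = numEdges E → Nonempty (G ≃g E))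

/-- The member of the family `𝒴_{k+1,ℓ+1}` obtained from the path `P_{k+1}`
(on `Fin (k+1)`) by appending a path `P_{ℓ+1}` to its vertex `j` (the branching
vertex), the appended path having the `ℓ` extra vertices `Fin l`. -/
def Ygraph (k l j : ℕ) : SimpleGraph (Fin (k + 1) ⊕ Fin l) :=
  SimpleGraph.fromRel (fun x y => match x, y with
    | .inl a, .inl b => b.val = a.val + 1
    | .inl a, .inr b => a.val = j ∧ b.val = 0
    | .inr a, .inr b => b.val = a.val + 1
    | _, _ => False)

/-- The graph obtained from `H` by splitting every vertex of `U`: each `v ∈ U`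
is replaced by `deg v` new vertices, one for each neighbor `w` of `v`, joined to
`w` only. -/
def splitGraph {V : Type*} (H : SimpleGraph V) (U : Set V) :
    SimpleGraph ({v : V // v ∉ U} ⊕ {p : V × V // p.1 ∈ U ∧ H.Adj p.1 p.2}) where
  Adj x y := match x, y with
    | .inl a, .inl b => H.Adj a.1 b.1
    | .inl a, .inr e => e.1.2 = a.1
    | .inr e, .inl a => e.1.2 = a.1
    | .inr _, .inr _ => False
  symm := ⟨by rintro (a | e) (b | f) h <;> first | exact h.symm | exact h⟩
  loopless := ⟨by rintro (a | e) h <;> simp_all⟩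

/-!
Write `ℓ = 2k + 1` and split the centre `0` of the triangle together with the even path
vertices `4, 6, …, 2k + 2`; no two of them are adjacent. The triangle opens up into the path
`P_4` through `1` and `2`, each odd path vertex `2i + 3` with `i < k` becomes the middle of a
`P_3` whose ends are split copies of its two neighbours, and the last vertex `2k + 3` forms a
`P_2` with a split copy of its other neighbour.

For the blow-up, a vertex outside `U` goes to itself in the split graph and the new vertex of an
edge `uw` with `u ∈ U` goes to the copy of `u` attached to `w` (independence of `U` makes `u`
unique); these copies are adjacent to `w`, as required. The vertices of `U` and the new vertices
of edges avoiding `U` go injectively into `I_m`, which is joined to everything.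
-/

open Function

/-- The copy of `p.1 ∈ U` that the splitting attaches to its neighbour `p.2`. -/
abbrev SplitCopy {V : Type*} (H : SimpleGraph V) (U : Set V) :=
  {p : V × V // p.1 ∈ U ∧ H.Adj p.1 p.2}

section Adjacency

variable {α β V : Type*}

@[simp] lemma gJoin_adj_inl_inl (G : SimpleGraph α) (H : SimpleGraph β) (a b : α) :
    (gJoin G H).Adj (.inl a) (.inl b) ↔ G.Adj a b := Iff.rfl

@[simp] lemma gJoin_adj_inl_inr (G : SimpleGraph α) (H : SimpleGraph β) (a : α) (b : β) :
    (gJoin G H).Adj (.inl a) (.inr b) := trivial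

@[simp] lemma gJoin_adj_inr_inl (G : SimpleGraph α) (H : SimpleGraph β) (a : β) (b : α) :
    (gJoin G H).Adj (.inr a) (.inl b) := trivial

@[simp] lemma gJoin_adj_inr_inr (G : SimpleGraph α) (H : SimpleGraph β) (a b : β) :
    (gJoin G H).Adj (.inr a) (.inr b) ↔ H.Adj a b := Iff.rfl

@[simp] lemma splitGraph_adj_inl_inl (H : SimpleGraph V) (U : Set V) (a b : {v : V // v ∉ U}) :
    (splitGraph H U).Adj (.inl a) (.inl b) ↔ H.Adj a.1 b.1 := Iff.rfl

@[simp] lemma splitGraph_adj_inl_inr (H : SimpleGraph V) (U : Set V) (a : {v : V // v ∉ U})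
    (p : SplitCopy H U) :
    (splitGraph H U).Adj (.inl a) (.inr p) ↔ p.1.2 = a.1 := Iff.rfl

@[simp] lemma splitGraph_adj_inr_inl (H : SimpleGraph V) (U : Set V) (a : {v : V // v ∉ U})
    (p : SplitCopy H U) :
    (splitGraph H U).Adj (.inr p) (.inl a) ↔ p.1.2 = a.1 := Iff.rfl

@[simp] lemma splitGraph_adj_inr_inr (H : SimpleGraph V) (U : Set V)
    (p q : SplitCopy H U) :
    ¬ (splitGraph H U).Adj (.inr p) (.inr q) := id

@[simp] lemma dUnion_adj_inl_inl (G : SimpleGraph α) (H : SimpleGraph β) (a b : α) :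
    (dUnion G H).Adj (.inl a) (.inl b) ↔ G.Adj a b := Iff.rfl

@[simp] lemma dUnion_adj_inr_inr (G : SimpleGraph α) (H : SimpleGraph β) (a b : β) :
    (dUnion G H).Adj (.inr a) (.inr b) ↔ H.Adj a b := Iff.rfl

@[simp] lemma dUnion_adj_inl_inr (G : SimpleGraph α) (H : SimpleGraph β) (a : α) (b : β) :
    ¬ (dUnion G H).Adj (.inl a) (.inr b) := id

@[simp] lemma dUnion_adj_inr_inl (G : SimpleGraph α) (H : SimpleGraph β) (a : β) (b : α) :
    ¬ (dUnion G H).Adj (.inr a) (.inl b) := id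

@[simp] lemma copies_adj (n : ℕ) (G : SimpleGraph β) (x y : Fin n × β) :
    (copies n G).Adj x y ↔ x.1 = y.1 ∧ G.Adj x.2 y.2 := Iff.rfl

end Adjacency

lemma isCont_iff_isContained {α β : Type*} {A : SimpleGraph α} {B : SimpleGraph β} :
    IsCont A B ↔ A ⊑ B :=
  ⟨fun ⟨f, hf, hadj⟩ => ⟨⟨⟨f, fun h => hadj h⟩, hf⟩⟩,
    fun ⟨c⟩ => ⟨c, c.injective, fun _ _ h => c.toHom.map_adj h⟩⟩

def SimpleGraph.Iso.gJoinCongrLeft {α α' β : Type*} {G : SimpleGraph α} {G' : SimpleGraph α'}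
    (e : G ≃g G') (K : SimpleGraph β) : gJoin G K ≃g gJoin G' K where
  toEquiv := e.toEquiv.sumCongr (Equiv.refl β)
  map_rel_iff' := by rintro (a | a) (b | b) <;> simp [e.map_adj_iff]

section Split

variable {V β : Type*} {H : SimpleGraph V} {U : Set V}

lemma exists_split_of_mem {e : H.edgeSet} {u : V} (hu : u ∈ U) (he : u ∈ (e : Sym2 V)) :
    ∃ p : SplitCopy H U, s(p.1.1, p.1.2) = e :=
  have hs := Sym2.other_spec he
  ⟨⟨(u, Sym2.Mem.other he), hu, by rw [← H.mem_edgeSet, hs]; exact e.2⟩, hs⟩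

lemma eq_snd_of_mem_split {p : SplitCopy H U} {a : V} (ha : a ∉ U)
    (h : a ∈ s(p.1.1, p.1.2)) : p.1.2 = a := by
  rcases Sym2.mem_iff.mp h with rfl | rfl
  · exact absurd p.2.1 ha
  · rfl

open Classical in
noncomputable def blowupToSplitJoin (ι : V ⊕ (H.edgeSet × Fin (2 - 1)) ↪ β) :
    V ⊕ (H.edgeSet × Fin (2 - 1)) →
      ({v : V // v ∉ U} ⊕ SplitCopy H U) ⊕ β
  | .inl v => if h : v ∈ U then .inr (ι (.inl v)) else .inl (.inl ⟨v, h⟩)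
  | .inr e =>
    if h : ∃ p : SplitCopy H U, s(p.1.1, p.1.2) = e.1 then
      .inl (.inr h.choose)
    else .inr (ι (.inr e))

lemma blowupToSplitJoin_injective (ι : V ⊕ (H.edgeSet × Fin (2 - 1)) ↪ β) :
    Injective (blowupToSplitJoin (U := U) ι) := by
  rintro (a | e) (b | f) h <;> simp only [blowupToSplitJoin] at h <;> split_ifs at h with he hf <;>
    simp only [Sum.inl.injEq, Sum.inr.injEq, Subtype.mk.injEq, EmbeddingLike.apply_eq_iff_eq,
      reduceCtorEq] at h ⊢
  all_goals first
    | exact h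
    | have hef := he.choose_spec
      rw [h, hf.choose_spec] at hef
      exact Prod.ext (Subtype.ext hef.symm) (Subsingleton.elim (α := Fin 1) _ _)

lemma blowupToSplitJoin_adj (hU : ∀ u ∈ U, ∀ v ∈ U, ¬ H.Adj u v)
    (ι : V ⊕ (H.edgeSet × Fin (2 - 1)) ↪ β) {x y : V ⊕ (H.edgeSet × Fin (2 - 1))}
    (hxy : (edgeBlowup H 2).Adj x y) :
    (gJoin (splitGraph H U) (⊥ : SimpleGraph β)).Adj
      (blowupToSplitJoin ι x) (blowupToSplitJoin ι y) := by
  have vertex_edge : ∀ (a : V) (e : H.edgeSet × Fin (2 - 1)), a ∈ (e.1 : Sym2 V) →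
      (gJoin (splitGraph H U) (⊥ : SimpleGraph β)).Adj (blowupToSplitJoin ι (.inl a))
        (blowupToSplitJoin ι (.inr e)) := by
    intro a e hae
    by_cases ha : a ∈ U
    · simp [blowupToSplitJoin, ha, exists_split_of_mem ha hae]
    by_cases he : ∃ p : SplitCopy H U, s(p.1.1, p.1.2) = e.1
    · simp only [blowupToSplitJoin, ha, he, dif_pos]
      exact eq_snd_of_mem_split ha (by rw [he.choose_spec]; exact hae)
    · simp [blowupToSplitJoin, ha, he]
  rcases x with a | e <;> rcases y with b | f
  · by_cases ha : a ∈ U <;> by_cases hb : b ∈ U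
    · exact absurd hxy (hU a ha b hb)
    · simp [blowupToSplitJoin, ha, hb]
    · simp [blowupToSplitJoin, ha, hb]
    · simp only [blowupToSplitJoin, ha, hb, dite_false, gJoin_adj_inl_inl, splitGraph_adj_inl_inl]
      exact hxy
  · exact vertex_edge a f hxy
  · exact (vertex_edge b e hxy).symm
  · exact absurd (Subsingleton.elim (α := Fin 1) e.2 f.2) hxy.2

theorem isCont_edgeBlowup_gJoin_of_iso_splitGraph {γ : Type*}
    (hU : ∀ u ∈ U, ∀ v ∈ U, ¬ H.Adj u v) {G : SimpleGraph γ} (φ : splitGraph H U ≃g G)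
    (ι : V ⊕ (H.edgeSet × Fin (2 - 1)) ↪ β) :
    IsCont (edgeBlowup H 2) (gJoin G (⊥ : SimpleGraph β)) := by
  rw [isCont_iff_isContained, ← isContained_congr_right (φ.gJoinCongrLeft ⊥)]
  exact ⟨⟨⟨blowupToSplitJoin ι, blowupToSplitJoin_adj hU ι⟩, blowupToSplitJoin_injective ι⟩⟩

end Split

lemma lollipop_three_adj {l : ℕ} {a b : Fin (3 + l)} :
    (lollipop 3 l).Adj a b ↔
      (b.val = a.val + 1 ∧ a.val ≠ 2) ∨ (a.val = 0 ∧ 2 ≤ b.val ∧ b.val ≤ 3) ∨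
      (a.val = b.val + 1 ∧ b.val ≠ 2) ∨ (b.val = 0 ∧ 2 ≤ a.val ∧ a.val ≤ 3) := by
  simp only [lollipop, fromRel_adj, ne_eq, Fin.ext_iff]
  omega

namespace LollipopSplit

variable (k : ℕ)

def splitSet : Set (Fin (3 + (2 * k + 1))) := {v | v.val = 0 ∨ (v.val % 2 = 0 ∧ 4 ≤ v.val)}

lemma splitSet_independent :
    ∀ u ∈ splitSet k, ∀ v ∈ splitSet k, ¬ (lollipop 3 (2 * k + 1)).Adj u v := by
  simp only [splitSet, Set.mem_ofPred_eq, lollipop_three_adj]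
  omega

abbrev Vert := {v // v ∉ splitSet k} ⊕ SplitCopy (lollipop 3 (2 * k + 1)) (splitSet k)

abbrev forest := dUnion (pathGraph 4) (dUnion (copies k (pathGraph 3)) (pathGraph 2))

variable {k}

def Vert.kept (v : ℕ) (hv : v < 3 + (2 * k + 1)) (h : v ≠ 0 ∧ (v % 2 = 1 ∨ v < 4)) : Vert k :=
  .inl ⟨⟨v, hv⟩, by simp only [splitSet, Set.mem_ofPred_eq]; omega⟩

def Vert.split (u w : ℕ) (hu : u < 3 + (2 * k + 1)) (hw : w < 3 + (2 * k + 1))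
    (h : (u = 0 ∧ 1 ≤ w ∧ w ≤ 3) ∨ (u % 2 = 0 ∧ 4 ≤ u ∧ (w = u + 1 ∨ w + 1 = u))) : Vert k :=
  .inr ⟨(⟨u, hu⟩, ⟨w, hw⟩), by simp only [splitSet, Set.mem_ofPred_eq, lollipop_three_adj]; omega⟩

/-- The neighbour of the path vertex `2i + 3` on the side of the triangle. -/
def leftNeighbor (i : ℕ) : ℕ := if i = 0 then 0 else 2 * i + 2

/-- Vertex `j` of the `i`-th `P_3` of the forest, the index `i = k` standing for the final `P_2`. -/
def pathVertex (i j : ℕ) : Fin 4 ⊕ (Fin k × Fin 3 ⊕ Fin 2) :=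
  if h : i < k then .inr (.inl (⟨i, h⟩, ⟨j % 3, Nat.mod_lt _ (by norm_num)⟩))
  else .inr (.inr ⟨j % 2, Nat.mod_lt _ (by norm_num)⟩)

def toSplit : Fin 4 ⊕ (Fin k × Fin 3 ⊕ Fin 2) → Vert k
  | .inl ⟨0, _⟩ => .split 0 1 (by omega) (by omega) (by omega)
  | .inl ⟨1, _⟩ => .kept 1 (by omega) (by omega)
  | .inl ⟨2, _⟩ => .kept 2 (by omega) (by omega)
  | .inl ⟨3, _⟩ => .split 0 2 (by omega) (by omega) (by omega)
  | .inr (.inl (⟨i, _⟩, ⟨0, _⟩)) =>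
    .split (leftNeighbor i) (2 * i + 3) (by grind [leftNeighbor]) (by omega)
      (by grind [leftNeighbor])
  | .inr (.inl (⟨i, _⟩, ⟨1, _⟩)) => .kept (2 * i + 3) (by omega) (by omega)
  | .inr (.inl (⟨i, _⟩, ⟨2, _⟩)) => .split (2 * i + 4) (2 * i + 3) (by omega) (by omega) (by omega)
  | .inr (.inr ⟨0, _⟩) =>
    .split (leftNeighbor k) (2 * k + 3) (by grind [leftNeighbor]) (by omega)
      (by grind [leftNeighbor])
  | .inr (.inr ⟨1, _⟩) => .kept (2 * k + 3) (by omega) (by omega)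

def ofSplit : Vert k → Fin 4 ⊕ (Fin k × Fin 3 ⊕ Fin 2)
  | .inl ⟨⟨v, _⟩, _⟩ =>
    if v = 1 then .inl 1 else if v = 2 then .inl 2 else pathVertex ((v - 3) / 2) 1
  | .inr ⟨(⟨u, _⟩, ⟨w, _⟩), _⟩ =>
    if u = 0 then (if w = 1 then .inl 0 else if w = 2 then .inl 3 else pathVertex 0 0)
    else if w = u + 1 then pathVertex ((u - 2) / 2) 0 else pathVertex ((u - 4) / 2) 2

lemma ofSplit_toSplit (t : Fin 4 ⊕ (Fin k × Fin 3 ⊕ Fin 2)) : ofSplit (toSplit t) = t := by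
  rcases t with ⟨j, hj⟩ | ⟨⟨i, hi⟩, ⟨j, hj⟩⟩ | ⟨j, hj⟩ <;> interval_cases j <;>
    simp [toSplit, ofSplit, Vert.kept, Vert.split, pathVertex, leftNeighbor] <;>
    split_ifs <;> simp <;> omega

lemma toSplit_ofSplit (s : Vert k) : toSplit (ofSplit s) = s := by
  rcases s with ⟨⟨v, hv⟩, hvU⟩ | ⟨⟨⟨u, hu⟩, ⟨w, hw⟩⟩, huU, huw⟩
  · have hv' : ¬(v = 0 ∨ (v % 2 = 0 ∧ 4 ≤ v)) := hvU
    simp only [ofSplit, pathVertex]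
    split_ifs <;> simp [toSplit, Vert.kept] <;> omega
  · have hu' : u = 0 ∨ (u % 2 = 0 ∧ 4 ≤ u) := huU
    have huw' := lollipop_three_adj.mp huw
    dsimp only at huw'
    simp only [ofSplit, pathVertex]
    split_ifs <;> simp [toSplit, Vert.split, leftNeighbor] <;> (try split_ifs) <;> omega

lemma toSplit_adj_iff (a b : Fin 4 ⊕ (Fin k × Fin 3 ⊕ Fin 2)) :
    (splitGraph (lollipop 3 (2 * k + 1)) (splitSet k)).Adj (toSplit a) (toSplit b) ↔
      (forest k).Adj a b := by
  rcases a with ⟨a, ha⟩ | ⟨⟨i, hi⟩, ⟨a, ha⟩⟩ | ⟨a, ha⟩ <;>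
  rcases b with ⟨b, hb⟩ | ⟨⟨j, hj⟩, ⟨b, hb⟩⟩ | ⟨b, hb⟩ <;>
  interval_cases a <;> interval_cases b <;>
  simp [toSplit, Vert.kept, Vert.split, leftNeighbor, lollipop_three_adj, pathGraph_adj] <;>
  omega

variable (k) in
def forestIsoSplit : forest k ≃g splitGraph (lollipop 3 (2 * k + 1)) (splitSet k) where
  toFun := toSplit
  invFun := ofSplit
  left_inv := ofSplit_toSplit
  right_inv := toSplit_ofSplit
  map_rel_iff' := toSplit_adj_iff _ _

end LollipopSplit

theorem stmt18_general (l m : ℕ) (hlo : Odd l)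
    (hm : m = Nat.card (Fin (3 + l) ⊕ ((lollipop 3 l).edgeSet × Fin (2 - 1)))) :
    (∃ U : Set (Fin (3 + l)),
      (∀ u ∈ U, ∀ v ∈ U, ¬ (lollipop 3 l).Adj u v) ∧
      Nonempty (splitGraph (lollipop 3 l) U ≃g
        dUnion (pathGraph 4)
          (dUnion (copies ((l - 1) / 2) (pathGraph 3)) (pathGraph 2)))) ∧
    IsCont (edgeBlowup (lollipop 3 l) 2)
      (gJoin
        (dUnion (pathGraph 4)
          (dUnion (copies ((l - 1) / 2) (pathGraph 3)) (pathGraph 2)))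
        (⊥ : SimpleGraph (Fin m))) := by
  obtain ⟨k, rfl⟩ := hlo
  rw [show (2 * k + 1 - 1) / 2 = k by omega]
  have hU := LollipopSplit.splitSet_independent k
  have φ := (LollipopSplit.forestIsoSplit k).symm
  exact ⟨⟨_, hU, ⟨φ⟩⟩, isCont_edgeBlowup_gJoin_of_iso_splitGraph hU φ
    (Finite.equivFinOfCardEq hm.symm).toEmbedding⟩

/-- For odd `ℓ ≥ 3`, splitting an appropriate independent set of the
lollipop `C_{3,ℓ}` yields `P_4 ∪ ((ℓ-1)/2)·P_3 ∪ P_2`, and hence `C_{3,ℓ}^3` is a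
subgraph of `(P_4 ∪ ((ℓ-1)/2)·P_3 ∪ P_2) ∨ I_m` for `m = |V(C_{3,ℓ}^3)|`. -/
theorem stmt18 (l m : ℕ) (hl : 3 ≤ l) (hlo : Odd l)
    (hm : m = Nat.card (Fin (3 + l) ⊕ ((lollipop 3 l).edgeSet × Fin (2 - 1)))) :
    (∃ U : Set (Fin (3 + l)),
      (∀ u ∈ U, ∀ v ∈ U, ¬ (lollipop 3 l).Adj u v) ∧
      Nonempty (splitGraph (lollipop 3 l) U ≃g
        dUnion (pathGraph 4)
          (dUnion (copies ((l - 1) / 2) (pathGraph 3)) (pathGraph 2)))) ∧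
    IsCont (edgeBlowup (lollipop 3 l) 2)
      (gJoin
        (dUnion (pathGraph 4)
          (dUnion (copies ((l - 1) / 2) (pathGraph 3)) (pathGraph 2)))
        (⊥ : SimpleGraph (Fin m))) :=
  stmt18_general l m hlo hm
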